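/- Fix α ∈ (0,1), a > 0, T ∈ ℕ with T ≥ 1, real numbers A ≤ B, outcomes y_1, …, y_T ∈ [A, B], and vectors x_1, …, x_T ∈ ℝ^{p+1} with ‖x_t‖_∞ ≤ max(1, B) for all t. Let L̃_T^θ = Σ_{t=1}^{T} λ_α(y_t, min(max(x_t'θ, A), B)) denote the cumulative truncated pinball loss of θ and L_T^θ = Σ_{t=1}^{T} λ_α(y_t, x_t'θ) the cumulative (untruncated) pinball loss. Suppose a real number L_T (the learner's cumulative loss) satisfies the bound L_T ≤ √T·( −ln( (a/2)^{p+1} · ∫_{ℝ^{p+1}} exp(−L̃_T^θ/√T − a‖θ‖₁) dθ ) + (B − A)² ). Then for every θ ∈ ℝ^{p+1}: L_T ≤ L_T^θ + √T·a‖θ‖₁ + √T·( (p+1)·ln(1 + (√T/a)·max(1, B)) + (B − A)² ), and consequently the average regret (L_T − L_T^θ)/T is at most (1/√T)·a‖θ‖₁ + (1/√T)·( (p+1)·ln(1 + (√T/a)·max(1, B)) + (B − A)² ). -/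

import Mathlib

/-!
Around any fixed `θ` the truncated loss grows at most linearly: clamping the prediction to
`[A, B] ∋ y_t` can only decrease the pinball loss, which is 1-Lipschitz, and
`|x_t'(φ - θ)| ≤ max(1, B) ‖φ - θ‖₁`. So the integrand dominates
`exp(-L_T^θ/√T - a‖θ‖₁)` times an unnormalised Laplace density centred at `θ` with rate
`b = √T max(1, B) + a`, whose integral is `(2/b)^(p+1)`; taking `-ln` turns the resulting
factor `(a/b)^(p+1)` into `(p+1) ln(1 + √T max(1, B)/a)`.
-/

open MeasureTheory

/-- The pinball loss at level `α`: `λ_α(y, γ) = α(y − γ)` if `y ≥ γ` and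
`(1 − α)(γ − y)` if `y < γ`. -/
noncomputable def pinball (α y γ : ℝ) : ℝ :=
  if γ ≤ y then α * (y - γ) else (1 - α) * (γ - y)

open Real

section Pinball

variable {α : ℝ}

lemma pinball_nonneg (h0 : 0 ≤ α) (h1 : α ≤ 1) (y γ : ℝ) : 0 ≤ pinball α y γ := by
  unfold pinball; split_ifs <;> nlinarith

lemma lipschitzWith_one_pinball (h0 : 0 ≤ α) (h1 : α ≤ 1) (y : ℝ) :
    LipschitzWith 1 (pinball α y) :=
  LipschitzWith.of_le_add fun γ γ' => by
    rw [Real.dist_eq]; unfold pinball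
    split_ifs <;> cases abs_cases (γ - γ') <;> nlinarith

lemma pinball_le_of_mem_uIcc (h0 : 0 ≤ α) (h1 : α ≤ 1) {y γ c : ℝ} (hc : c ∈ Set.uIcc y γ) :
    pinball α y c ≤ pinball α y γ := by
  rw [Set.mem_uIcc] at hc
  unfold pinball; split_ifs <;> rcases hc with ⟨_, _⟩ | ⟨_, _⟩ <;> nlinarith

lemma min_max_mem_uIcc {A B y : ℝ} (hy : y ∈ Set.Icc A B) (γ : ℝ) :
    min (max γ A) B ∈ Set.uIcc y γ := by
  obtain ⟨hA, hB⟩ := hy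
  rw [Set.mem_uIcc]
  rcases le_total y γ with h | h
  · exact .inl ⟨le_min (h.trans (le_max_left _ _)) hB,
      min_le_of_left_le (max_le le_rfl (hA.trans h))⟩
  · exact .inr ⟨le_min (le_max_left _ _) (h.trans hB), min_le_of_left_le (max_le h hA)⟩

end Pinball

section TruncatedLoss

variable {ι : Type*} [Fintype ι] {α A B M : ℝ}

lemma abs_sum_mul_sub_sum_mul_le {x : ι → ℝ} (hx : ∀ i, |x i| ≤ M) (φ θ : ι → ℝ) :
    |∑ i, x i * φ i - ∑ i, x i * θ i| ≤ M * ∑ i, |φ i - θ i| := by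
  rw [← Finset.sum_sub_distrib, Finset.mul_sum]
  refine (Finset.abs_sum_le_sum_abs _ _).trans (Finset.sum_le_sum fun i _ => ?_)
  rw [← mul_sub, abs_mul]
  exact mul_le_mul_of_nonneg_right (hx i) (abs_nonneg _)

lemma pinball_min_max_le (h0 : 0 ≤ α) (h1 : α ≤ 1) {y : ℝ} (hy : y ∈ Set.Icc A B) {x : ι → ℝ}
    (hx : ∀ i, |x i| ≤ M) (φ θ : ι → ℝ) :
    pinball α y (min (max (∑ i, x i * φ i) A) B)
      ≤ pinball α y (∑ i, x i * θ i) + M * ∑ i, |φ i - θ i| := by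
  have hlip : LipschitzWith 1 (pinball α y ∘ fun γ => min (max γ A) B) := by
    simpa using
      (lipschitzWith_one_pinball h0 h1 y).comp ((LipschitzWith.id.max_const A).min_const B)
  calc _ ≤ pinball α y (min (max (∑ i, x i * θ i) A) B)
        + |∑ i, x i * φ i - ∑ i, x i * θ i| := by
        simpa [Real.dist_eq] using hlip.le_add_mul (∑ i, x i * φ i) (∑ i, x i * θ i)
    _ ≤ _ := add_le_add (pinball_le_of_mem_uIcc h0 h1 (min_max_mem_uIcc hy _))
        (abs_sum_mul_sub_sum_mul_le hx φ θ)

lemma sum_pinball_min_max_le {κ : Type*} (h0 : 0 ≤ α) (h1 : α ≤ 1) (s : Finset κ) {y : κ → ℝ}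
    (hy : ∀ t ∈ s, y t ∈ Set.Icc A B) {x : κ → ι → ℝ} (hx : ∀ t ∈ s, ∀ i, |x t i| ≤ M)
    (φ θ : ι → ℝ) :
    ∑ t ∈ s, pinball α (y t) (min (max (∑ i, x t i * φ i) A) B)
      ≤ ∑ t ∈ s, pinball α (y t) (∑ i, x t i * θ i) + s.card * M * ∑ i, |φ i - θ i| := by
  grw [Finset.sum_le_sum fun t ht => pinball_min_max_le h0 h1 (hy t ht) (hx t ht) φ θ]
  rw [Finset.sum_add_distrib, Finset.sum_const, nsmul_eq_mul, mul_assoc]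

end TruncatedLoss

lemma integral_exp_neg_mul_abs {b : ℝ} (hb : 0 < b) : ∫ u : ℝ, exp (-b * |u|) = 2 / b := by
  rw [integral_comp_abs (f := fun u => exp (-b * u)), integral_exp_mul_Ioi (neg_neg_of_pos hb)]
  field_simp
  simp

section Laplace

variable {ι : Type*} [Fintype ι]

lemma integral_exp_neg_mul_sum_abs_sub {b : ℝ} (hb : 0 < b) (θ : ι → ℝ) :
    ∫ φ : ι → ℝ, exp (-b * ∑ i, |φ i - θ i|) = (2 / b) ^ Fintype.card ι := by
  simp_rw [Finset.mul_sum, Real.exp_sum]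
  rw [integral_fintype_prod_volume_eq_prod (f := fun i u => exp (-b * |u - θ i|))]
  simp_rw [integral_sub_right_eq_self (fun u => exp (-b * |u|)), integral_exp_neg_mul_abs hb,
    Finset.prod_const, Finset.card_univ]

lemma integrable_exp_neg_mul_sum_abs_sub {b : ℝ} (hb : 0 < b) (θ : ι → ℝ) :
    Integrable fun φ : ι → ℝ => exp (-b * ∑ i, |φ i - θ i|) :=
  .of_integral_ne_zero (by rw [integral_exp_neg_mul_sum_abs_sub hb]; positivity)

lemma exp_mul_two_div_pow_le_integral {F : (ι → ℝ) → ℝ} (hF : Measurable F) (hF0 : ∀ φ, 0 ≤ F φ)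
    {a K G : ℝ} (ha : 0 < a) (hK : 0 ≤ K) {θ : ι → ℝ}
    (hFθ : ∀ φ, F φ ≤ G + K * ∑ i, |φ i - θ i|) :
    exp (-(G + a * ∑ i, |θ i|)) * (2 / (K + a)) ^ Fintype.card ι
      ≤ ∫ φ, exp (-F φ - a * ∑ i, |φ i|) := by
  rw [← integral_exp_neg_mul_sum_abs_sub (by positivity : 0 < K + a) θ, ← integral_const_mul]
  have hdom : Integrable fun φ : ι → ℝ => exp (-a * ∑ i, |φ i|) := by
    simpa using integrable_exp_neg_mul_sum_abs_sub ha 0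
  refine integral_mono ((integrable_exp_neg_mul_sum_abs_sub (by positivity) θ).const_mul _)
    (hdom.mono' (by fun_prop) (ae_of_all _ fun φ => ?_)) fun φ => ?_
  · rw [Real.norm_of_nonneg (exp_pos _).le, exp_le_exp]
    linarith [hF0 φ]
  · have hnorm : ∑ i, |φ i| ≤ ∑ i, |θ i| + ∑ i, |φ i - θ i| := by
      rw [← Finset.sum_add_distrib]
      exact Finset.sum_le_sum fun i _ => by linarith [abs_sub_abs_le_abs_sub (φ i) (θ i)]
    rw [← exp_add, exp_le_exp]
    linarith [hFθ φ, mul_le_mul_of_nonneg_left hnorm ha.le]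

theorem neg_log_laplace_mixture_le {F : (ι → ℝ) → ℝ} (hF : Measurable F) (hF0 : ∀ φ, 0 ≤ F φ)
    {a K G : ℝ} (ha : 0 < a) (hK : 0 ≤ K) {θ : ι → ℝ}
    (hFθ : ∀ φ, F φ ≤ G + K * ∑ i, |φ i - θ i|) :
    -log ((a / 2) ^ Fintype.card ι * ∫ φ, exp (-F φ - a * ∑ i, |φ i|))
      ≤ G + a * ∑ i, |θ i| + Fintype.card ι * log (1 + K / a) := by
  have hexp : exp (-(G + a * ∑ i, |θ i| + Fintype.card ι * log (1 + K / a)))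
      = (a / 2) ^ Fintype.card ι
        * (exp (-(G + a * ∑ i, |θ i|)) * (2 / (K + a)) ^ Fintype.card ι) := by
    rw [neg_add, exp_add, ← mul_neg, exp_nat_mul, exp_neg (log _), exp_log (by positivity)]
    field_simp
    rw [← mul_pow, add_comm K a]
    field_simp
  have hlow := mul_le_mul_of_nonneg_left (exp_mul_two_div_pow_le_integral hF hF0 ha hK hFθ)
    (by positivity : (0 : ℝ) ≤ (a / 2) ^ Fintype.card ι)
  rw [← hexp] at hlow
  rw [neg_le, le_log_iff_exp_le ((exp_pos _).trans_le hlow)]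
  exact hlow

end Laplace

theorem regret_bound_of_waa_guarantee_general {p : ℕ} (α a A B : ℝ)
    (hα : α ∈ Set.Ioo (0 : ℝ) 1) (ha : 0 < a)
    (T : ℕ) (hT : 1 ≤ T)
    (y : ℕ → ℝ) (hy : ∀ t ∈ Finset.Icc 1 T, y t ∈ Set.Icc A B)
    (x : ℕ → Fin (p + 1) → ℝ)
    (hx : ∀ t ∈ Finset.Icc 1 T, ∀ i, |x t i| ≤ max 1 B)
    (LT : ℝ)
    (hLT : LT ≤ Real.sqrt T *
        (-Real.log ((a / 2) ^ (p + 1) *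
            ∫ θ : Fin (p + 1) → ℝ,
              Real.exp (-(∑ t ∈ Finset.Icc 1 T,
                  pinball α (y t) (min (max (∑ i, x t i * θ i) A) B)) / Real.sqrt T
                - a * ∑ i, |θ i|))
          + (B - A) ^ 2)) :
    ∀ θ : Fin (p + 1) → ℝ,
      LT ≤ (∑ t ∈ Finset.Icc 1 T, pinball α (y t) (∑ i, x t i * θ i))
          + Real.sqrt T * (a * ∑ i, |θ i|)
          + Real.sqrt T *
              ((p + 1 : ℝ) * Real.log (1 + Real.sqrt T / a * max 1 B) + (B - A) ^ 2)
        ∧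
      (LT - ∑ t ∈ Finset.Icc 1 T, pinball α (y t) (∑ i, x t i * θ i)) / T
        ≤ (1 / Real.sqrt T) * (a * ∑ i, |θ i|)
          + (1 / Real.sqrt T) *
              ((p + 1 : ℝ) * Real.log (1 + Real.sqrt T / a * max 1 B) + (B - A) ^ 2) := by
  intro θ
  have hT0 : (0 : ℝ) < T := by exact_mod_cast hT
  have hsT : 0 < √(T : ℝ) := sqrt_pos.mpr hT0
  set L := ∑ t ∈ Finset.Icc 1 T, pinball α (y t) (∑ i, x t i * θ i)
  have hloss (φ : Fin (p + 1) → ℝ) :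
      (∑ t ∈ Finset.Icc 1 T, pinball α (y t) (min (max (∑ i, x t i * φ i) A) B)) / √T
        ≤ L / √T + √T * max 1 B * ∑ i, |φ i - θ i| := by
    have h := sum_pinball_min_max_le hα.1.le hα.2.le _ hy hx φ θ
    rw [Nat.card_Icc, add_tsub_cancel_right] at h
    rw [div_le_iff₀ hsT, add_mul, div_mul_cancel₀ _ hsT.ne']
    linear_combination h - (max 1 B * ∑ i, |φ i - θ i|) * mul_self_sqrt hT0.le
  have hF : Measurable fun φ : Fin (p + 1) → ℝ =>
      (∑ t ∈ Finset.Icc 1 T, pinball α (y t) (min (max (∑ i, x t i * φ i) A) B)) / √T :=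
    (continuous_finsetSum _ fun t _ =>
      (lipschitzWith_one_pinball hα.1.le hα.2.le (y t)).continuous.comp
        (by fun_prop)).div_const _ |>.measurable
  have hlog := neg_log_laplace_mixture_le hF
    (fun φ => div_nonneg (Finset.sum_nonneg fun t _ => pinball_nonneg hα.1.le hα.2.le _ _) hsT.le)
    ha (by positivity) hloss
  simp_rw [neg_div] at hLT
  rw [Fintype.card_fin] at hlog
  have hregret : LT ≤ L + √T * (a * ∑ i, |θ i|)
      + √T * ((p + 1 : ℝ) * log (1 + √T / a * max 1 B) + (B - A) ^ 2) := by
    calc LT ≤ _ := hLT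
      _ ≤ √T * (L / √T + a * ∑ i, |θ i| + (p + 1 : ℝ) * log (1 + √T * max 1 B / a)
          + (B - A) ^ 2) := by
        push_cast at hlog; gcongr
      _ = _ := by field_simp; ring
  refine ⟨hregret, ?_⟩
  calc (LT - L) / T
      ≤ (√T * (a * ∑ i, |θ i|) + √T * ((p + 1 : ℝ) * log (1 + √T / a * max 1 B) + (B - A) ^ 2))
        / T := by gcongr; linarith
    _ = _ := by rw [← mul_add, mul_div_right_comm, sqrt_div_self', mul_add]

theorem regret_bound_of_waa_guarantee {p : ℕ} (α a A B : ℝ)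
    (hα : α ∈ Set.Ioo (0 : ℝ) 1) (ha : 0 < a) (hAB : A ≤ B)
    (T : ℕ) (hT : 1 ≤ T)
    (y : ℕ → ℝ) (hy : ∀ t ∈ Finset.Icc 1 T, y t ∈ Set.Icc A B)
    (x : ℕ → Fin (p + 1) → ℝ)
    (hx : ∀ t ∈ Finset.Icc 1 T, ∀ i, |x t i| ≤ max 1 B)
    (LT : ℝ)
    (hLT : LT ≤ Real.sqrt T *
        (-Real.log ((a / 2) ^ (p + 1) *
            ∫ θ : Fin (p + 1) → ℝ,
              Real.exp (-(∑ t ∈ Finset.Icc 1 T,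
                  pinball α (y t) (min (max (∑ i, x t i * θ i) A) B)) / Real.sqrt T
                - a * ∑ i, |θ i|))
          + (B - A) ^ 2)) :
    ∀ θ : Fin (p + 1) → ℝ,
      LT ≤ (∑ t ∈ Finset.Icc 1 T, pinball α (y t) (∑ i, x t i * θ i))
          + Real.sqrt T * (a * ∑ i, |θ i|)
          + Real.sqrt T *
              ((p + 1 : ℝ) * Real.log (1 + Real.sqrt T / a * max 1 B) + (B - A) ^ 2)
        ∧
      (LT - ∑ t ∈ Finset.Icc 1 T, pinball α (y t) (∑ i, x t i * θ i)) / T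
        ≤ (1 / Real.sqrt T) * (a * ∑ i, |θ i|)
          + (1 / Real.sqrt T) *
              ((p + 1 : ℝ) * Real.log (1 + Real.sqrt T / a * max 1 B) + (B - A) ^ 2) :=
  regret_bound_of_waa_guarantee_general α a A B hα ha T hT y hy x hx LT hLT
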